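/- Let 0 < q < 1 be a real number, let y > 0 be a real number, and let n be a natural number. Then Σ_{k=0}^{n} (-1)^k [n choose k]_q · q^{binom(k+1,2) - n(y+k)} · [y]_q / [y+k]_q = [n]_q! / ( [y+1]_q [y+2]_q ⋯ [y+n]_q ). -/

import Mathlib

/-- The `q`-number of a real `t`: `[t]_q = (1 - q^t)/(1 - q)` (real exponentiation). -/
noncomputable def qnumR (q t : ℝ) : ℝ := (1 - q ^ t) / (1 - q)

/-- The `q`-number `[m]_q = (1 - q^m)/(1 - q)`. -/
noncomputable def qnum (q : ℝ) (m : ℕ) : ℝ := (1 - q ^ m) / (1 - q)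

/-- The `q`-factorial `[n]_q! = [1]_q [2]_q ⋯ [n]_q`. -/
noncomputable def qfact (q : ℝ) (n : ℕ) : ℝ := ∏ i ∈ Finset.range n, qnum q (i + 1)

/-- The `q`-binomial coefficient `[n choose k]_q = [n]_q! / ([k]_q! [n-k]_q!)`. -/
noncomputable def qbinom (q : ℝ) (n k : ℕ) : ℝ := qfact q n / (qfact q k * qfact q (n - k))

/-!
Write the summand as `(-1)^k [n choose k]_q · w_n(y, k)`. The `q`-Pascal rule
`[n+1 choose k]_q = q^k [n choose k]_q + [n choose k-1]_q` splits the sum for `n + 1` into two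
sums for `n`, and the weights satisfy `q^k w_{n+1}(y, k) = q^{-y} w_n(y, k)` and
`w_{n+1}(y, k+1) = q^{-y} ([y]_q/[y+1]_q) w_n(y+1, k)`. Hence both sides `S_n(y)` satisfy
`S_{n+1}(y) = q^{-y} (S_n(y) - ([y]_q/[y+1]_q) S_n(y+1))`; for the right-hand side this is
`[y+n+1]_q - [y]_q = q^y [n+1]_q`. Induction on `n`, for all `y > 0` at once.
-/

open Finset

noncomputable def qWeight (q y : ℝ) (n k : ℕ) : ℝ :=
  q ^ ((((k + 1).choose 2 : ℕ) : ℝ) - (n : ℝ) * (y + (k : ℝ)))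
    * (qnumR q y / qnumR q (y + (k : ℝ)))

noncomputable def qRising (q y : ℝ) (n : ℕ) : ℝ :=
  ∏ i ∈ range n, qnumR q (y + ((i : ℝ) + 1))

variable {q : ℝ}

theorem qnum_eq_qnumR (m : ℕ) : qnum q m = qnumR q m := by
  simp only [qnum, qnumR, Real.rpow_natCast]

theorem qnumR_pos (hq0 : 0 < q) (hq1 : q ≠ 1) {t : ℝ} (ht : 0 < t) : 0 < qnumR q t := by
  rcases hq1.lt_or_gt with h | h
  · exact div_pos (sub_pos.2 (Real.rpow_lt_one hq0.le h ht)) (sub_pos.2 h)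
  · exact div_pos_of_neg_of_neg (sub_neg.2 (Real.one_lt_rpow h ht)) (sub_neg.2 h)

theorem qnum_pos (hq0 : 0 < q) (hq1 : q ≠ 1) {m : ℕ} (hm : 0 < m) : 0 < qnum q m :=
  qnum_eq_qnumR m ▸ qnumR_pos hq0 hq1 (Nat.cast_pos.2 hm)

theorem qfact_pos (hq0 : 0 < q) (hq1 : q ≠ 1) (n : ℕ) : 0 < qfact q n :=
  prod_pos fun i _ => qnum_pos hq0 hq1 i.succ_pos

theorem qnum_add (hq1 : q ≠ 1) (a b : ℕ) : qnum q (a + b) = qnum q a + q ^ a * qnum q b := by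
  have : 1 - q ≠ 0 := sub_ne_zero.2 hq1.symm
  simp only [qnum]
  field_simp
  ring

theorem qnumR_add (hq0 : 0 < q) (hq1 : q ≠ 1) (s t : ℝ) :
    qnumR q (s + t) = qnumR q s + q ^ s * qnumR q t := by
  have : 1 - q ≠ 0 := sub_ne_zero.2 hq1.symm
  simp only [qnumR, Real.rpow_add hq0]
  field_simp
  ring

theorem qfact_zero : qfact q 0 = 1 := prod_range_zero _

theorem qfact_succ (n : ℕ) : qfact q (n + 1) = qfact q n * qnum q (n + 1) := prod_range_succ _ _

theorem qbinom_zero_right (hq0 : 0 < q) (hq1 : q ≠ 1) (n : ℕ) : qbinom q n 0 = 1 := by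
  simp [qbinom, qfact_zero, (qfact_pos hq0 hq1 n).ne']

theorem qbinom_self (hq0 : 0 < q) (hq1 : q ≠ 1) (n : ℕ) : qbinom q n n = 1 := by
  simp [qbinom, qfact_zero, (qfact_pos hq0 hq1 n).ne']

theorem qbinom_succ_succ (hq0 : 0 < q) (hq1 : q ≠ 1) {n j : ℕ} (h : j < n) :
    qbinom q (n + 1) (j + 1) = qbinom q n j + q ^ (j + 1) * qbinom q n (j + 1) := by
  obtain ⟨m, rfl⟩ : ∃ m, n = j + m + 1 := ⟨n - j - 1, by omega⟩
  have e1 : j + m + 1 + 1 - (j + 1) = m + 1 := by omega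
  have e2 : j + m + 1 - j = m + 1 := by omega
  have e3 : j + m + 1 - (j + 1) = m := by omega
  have hsplit : qnum q (j + m + 1 + 1) = qnum q (j + 1) + q ^ (j + 1) * qnum q (m + 1) := by
    rw [← qnum_add hq1]
    ring_nf
  have := (qfact_pos hq0 hq1 j).ne'
  have := (qfact_pos hq0 hq1 m).ne'
  have := (qnum_pos hq0 hq1 j.succ_pos).ne'
  have := (qnum_pos hq0 hq1 m.succ_pos).ne'
  simp only [qbinom, e1, e2, e3, qfact_succ, hsplit]
  field_simp

theorem sum_alternating_qbinom_succ (hq0 : 0 < q) (hq1 : q ≠ 1) (n : ℕ) (f : ℕ → ℝ) :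
    ∑ k ∈ range (n + 2), (-1 : ℝ) ^ k * qbinom q (n + 1) k * f k
      = ∑ k ∈ range (n + 1), (-1 : ℝ) ^ k * qbinom q n k * (q ^ k * f k)
        - ∑ k ∈ range (n + 1), (-1 : ℝ) ^ k * qbinom q n k * f (k + 1) := by
  have hmid : ∀ j ∈ range n, (-1 : ℝ) ^ (j + 1) * qbinom q (n + 1) (j + 1) * f (j + 1)
      = (-1 : ℝ) ^ (j + 1) * qbinom q n (j + 1) * (q ^ (j + 1) * f (j + 1))
        - (-1 : ℝ) ^ j * qbinom q n j * f (j + 1) := by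
    intro j hj
    rw [qbinom_succ_succ hq0 hq1 (mem_range.1 hj), pow_succ]
    ring
  rw [sum_range_succ' _ (n + 1), sum_range_succ _ n, sum_congr rfl hmid, sum_sub_distrib,
    sum_range_succ' _ n, sum_range_succ _ n]
  simp only [qbinom_zero_right hq0 hq1, qbinom_self hq0 hq1]
  ring

theorem qWeight_succ (hq0 : 0 < q) (y : ℝ) (n k : ℕ) :
    q ^ k * qWeight q y (n + 1) k = q ^ (-y) * qWeight q y n k := by
  have hexp :
      q ^ k * q ^ ((((k + 1).choose 2 : ℕ) : ℝ) - ((n + 1 : ℕ) : ℝ) * (y + (k : ℝ)))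
      = q ^ (-y) * q ^ ((((k + 1).choose 2 : ℕ) : ℝ) - (n : ℝ) * (y + (k : ℝ))) := by
    rw [← Real.rpow_natCast q k, ← Real.rpow_add hq0, ← Real.rpow_add hq0]
    push_cast
    ring_nf
  simp only [qWeight, ← mul_assoc, hexp]

theorem qWeight_succ_succ (hq0 : 0 < q) {y : ℝ} (hy : qnumR q (y + 1) ≠ 0) (n k : ℕ) :
    qWeight q y (n + 1) (k + 1)
      = q ^ (-y) * (qnumR q y / qnumR q (y + 1)) * qWeight q (y + 1) n k := by
  have hexp :
      q ^ ((((k + 1 + 1).choose 2 : ℕ) : ℝ) - ((n + 1 : ℕ) : ℝ) * (y + ((k + 1 : ℕ) : ℝ)))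
      = q ^ (-y) * q ^ ((((k + 1).choose 2 : ℕ) : ℝ) - (n : ℝ) * (y + 1 + (k : ℝ))) := by
    rw [← Real.rpow_add hq0, Nat.choose_succ_succ (k + 1), Nat.choose_one_right]
    push_cast
    ring_nf
  simp only [qWeight, hexp]
  rw [show y + 1 + (k : ℝ) = y + ((k + 1 : ℕ) : ℝ) by push_cast; ring]
  field_simp

theorem sum_qWeight_succ (hq0 : 0 < q) (hq1 : q ≠ 1) {y : ℝ} (hy : qnumR q (y + 1) ≠ 0)
    (n : ℕ) :
    ∑ k ∈ range (n + 2), (-1 : ℝ) ^ k * qbinom q (n + 1) k * qWeight q y (n + 1) k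
      = q ^ (-y) * (∑ k ∈ range (n + 1), (-1 : ℝ) ^ k * qbinom q n k * qWeight q y n k
        - qnumR q y / qnumR q (y + 1)
          * ∑ k ∈ range (n + 1), (-1 : ℝ) ^ k * qbinom q n k * qWeight q (y + 1) n k) := by
  simp only [sum_alternating_qbinom_succ hq0 hq1, qWeight_succ hq0, qWeight_succ_succ hq0 hy,
    mul_sub, mul_sum]
  congr 1 <;> refine sum_congr rfl fun k _ => by ring

theorem qRising_succ (q y : ℝ) (n : ℕ) :
    qRising q y (n + 1) = qRising q y n * qnumR q (y + ((n : ℝ) + 1)) :=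
  prod_range_succ _ _

theorem qRising_succ' (q y : ℝ) (n : ℕ) :
    qRising q y (n + 1) = qnumR q (y + 1) * qRising q (y + 1) n := by
  rw [qRising, qRising, prod_range_succ', mul_comm]
  congr 1
  · norm_num
  · exact prod_congr rfl fun i _ => by push_cast; ring_nf

theorem qfact_div_qRising_succ (hq0 : 0 < q) (hq1 : q ≠ 1) {y : ℝ} (hy : 0 < y) (n : ℕ) :
    qfact q (n + 1) / qRising q y (n + 1)
      = q ^ (-y) * (qfact q n / qRising q y n
        - qnumR q y / qnumR q (y + 1) * (qfact q n / qRising q (y + 1) n)) := by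
  have hy1 : 0 < y + 1 := by linarith
  have hrising : qRising q (y + 1) n
      = qRising q y n * qnumR q (y + ((n : ℝ) + 1)) / qnumR q (y + 1) := by
    rw [← qRising_succ, qRising_succ', mul_div_cancel_left₀ _ (qnumR_pos hq0 hq1 hy1).ne']
  have hgap : qnumR q (y + ((n : ℝ) + 1)) = qnumR q y + qnum q (n + 1) * q ^ y := by
    rw [qnumR_add hq0 hq1, qnum_eq_qnumR, mul_comm]
    push_cast
    rfl
  have : qnumR q y + qnum q (n + 1) * q ^ y ≠ 0 :=
    hgap ▸ (qnumR_pos hq0 hq1 (by positivity)).ne'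
  have := (qnumR_pos hq0 hq1 hy1).ne'
  rw [hrising, qRising_succ, qfact_succ, hgap, Real.rpow_neg hq0.le]
  field_simp
  ring

theorem sum_alternating_qbinom_mul_qWeight (hq0 : 0 < q) (hq1 : q ≠ 1) {y : ℝ} (hy : 0 < y)
    (n : ℕ) :
    ∑ k ∈ range (n + 1), (-1 : ℝ) ^ k * qbinom q n k * qWeight q y n k
      = qfact q n / qRising q y n := by
  induction n generalizing y with
  | zero =>
    simp [qWeight, qRising, qbinom_zero_right hq0 hq1, qfact_zero, (qnumR_pos hq0 hq1 hy).ne']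
  | succ n ih =>
    have hy1 : 0 < y + 1 := by linarith
    rw [sum_qWeight_succ hq0 hq1 (qnumR_pos hq0 hq1 hy1).ne', ih hy, ih hy1,
      qfact_div_qRising_succ hq0 hq1 hy]

/-- `Σ_{k=0}^{n} (-1)^k [n choose k]_q q^{binom(k+1,2) - n(y+k)} [y]_q/[y+k]_q
    = [n]_q! / ([y+1]_q [y+2]_q ⋯ [y+n]_q)`. -/
theorem stmt3 (q : ℝ) (hq0 : 0 < q) (hq1 : q < 1) (y : ℝ) (hy : 0 < y) (n : ℕ) :
    ∑ k ∈ Finset.range (n + 1),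
        (-1 : ℝ) ^ k * qbinom q n k
          * q ^ ((((k + 1).choose 2 : ℕ) : ℝ) - (n : ℝ) * (y + (k : ℝ)))
          * (qnumR q y / qnumR q (y + (k : ℝ)))
      = qfact q n / ∏ i ∈ Finset.range n, qnumR q (y + ((i : ℝ) + 1)) := by
  simpa only [qWeight, qRising, mul_assoc] using
    sum_alternating_qbinom_mul_qWeight hq0 hq1.ne hy n
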